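/- arXiv:1805.00298 — 5 statements merged into one kernel-verified Lean document; each statement's English description precedes it below -/
import Mathlib

section
/- Let f : ℝⁿ → ℝᵐ be continuous, Ω ⊆ ℝⁿ closed and nonempty, and ȳ ∈ f(Ω). If f|_Ω is proper at the sublevel ȳ (i.e., for every sequence {xᵏ} ⊆ Ω with ‖xᵏ‖ → ∞ and f(xᵏ) ≤ ȳ componentwise, one has ‖f(xᵏ)‖ → ∞) and the section f(Ω) ∩ (ȳ - ℝᵐ₊) is bounded, then this section is nonempty and compact. -/
open Filter

/-- If `f|_Ω` is proper at the sublevel `ȳ ∈ f(Ω)` and the section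
`f(Ω) ∩ (ȳ - ℝᵐ₊)` is bounded (below), then this section is nonempty and compact. -/
theorem proper_section_compact (n m : ℕ)
    (f : (Fin n → ℝ) → (Fin m → ℝ)) (hf : Continuous f)
    (Ω : Set (Fin n → ℝ)) (hΩc : IsClosed Ω) (hΩne : Ω.Nonempty)
    (ybar : Fin m → ℝ) (hybar : ybar ∈ f '' Ω)
    (hproper : ∀ x : ℕ → (Fin n → ℝ), (∀ k, x k ∈ Ω) →
      Tendsto (fun k => ‖x k‖) atTop atTop → (∀ k, f (x k) ≤ ybar) →
      Tendsto (fun k => ‖f (x k)‖) atTop atTop)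
    (hbdd : ∃ a : Fin m → ℝ, {z | z ∈ f '' Ω ∧ z ≤ ybar} ⊆ {z | a ≤ z}) :
    {z | z ∈ f '' Ω ∧ z ≤ ybar}.Nonempty ∧ IsCompact {z | z ∈ f '' Ω ∧ z ≤ ybar} := by
  obtain ⟨a, ha⟩ := hbdd
  have hSne : {z | z ∈ f '' Ω ∧ z ≤ ybar}.Nonempty := ⟨ybar, hybar, le_refl _⟩
  refine ⟨hSne, ?_⟩
  have hsub : {z | z ∈ f '' Ω ∧ z ≤ ybar} ⊆ Set.Icc a ybar := fun z hz => ⟨ha hz, hz.2⟩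
  have hclosed : IsClosed {z | z ∈ f '' Ω ∧ z ≤ ybar} := by
    apply IsSeqClosed.isClosed
    intro z L hz hL
    choose x hxΩ hfx using fun k => (hz k).1
    have hle : ∀ k, f (x k) ≤ ybar := fun k => (hfx k) ▸ (hz k).2
    have hzfx : ∀ k, z k = f (x k) := fun k => (hfx k).symm
    -- boundedness of x
    have hbx : ∃ R : ℝ, ∀ k, ‖x k‖ ≤ R := by
      by_contra h
      push_neg at h
      have hfreq : ∀ N : ℕ, ∃ᶠ k in atTop, (N : ℝ) < ‖x k‖ := by
        intro N
        rw [frequently_atTop]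
        intro M
        obtain ⟨C, hC⟩ := ((Set.finite_Icc 0 M).image fun k => ‖x k‖).bddAbove
        obtain ⟨k, hk⟩ := h (max (N : ℝ) C)
        refine ⟨k, ?_, lt_of_le_of_lt (le_max_left _ _) hk⟩
        by_contra hkM
        push_neg at hkM
        exact absurd
          (le_trans (hC ⟨k, ⟨Nat.zero_le _, hkM.le⟩, rfl⟩) (le_max_right (N : ℝ) C))
          (not_le.mpr hk)
      obtain ⟨φ, hφmono, hφ⟩ := Filter.extraction_forall_of_frequently hfreq
      have htends : Tendsto (fun k => ‖x (φ k)‖) atTop atTop :=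
        tendsto_atTop_mono (fun k => (hφ k).le) tendsto_natCast_atTop_atTop
      have hpr := hproper (x ∘ φ) (fun k => hxΩ (φ k)) htends (fun k => hle (φ k))
      have hlim : Tendsto (fun k => ‖f ((x ∘ φ) k)‖) atTop (nhds ‖L‖) := by
        have h1 : Tendsto (fun k => f (x (φ k))) atTop (nhds L) :=
          (hL.comp hφmono.tendsto_atTop).congr fun k => hzfx (φ k)
        exact h1.norm
      exact not_tendsto_atTop_of_tendsto_nhds hlim hpr
    obtain ⟨R, hR⟩ := hbx
    have hbdd' : Bornology.IsBounded (Metric.closedBall (0 : Fin n → ℝ) R) :=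
      Metric.isBounded_closedBall
    obtain ⟨xbar, _, φ, hφ, hxφ⟩ := tendsto_subseq_of_bounded hbdd'
      (fun k => Metric.mem_closedBall.mpr (by simpa using hR k))
    have hxbarΩ : xbar ∈ Ω := hΩc.mem_of_tendsto hxφ
      (Eventually.of_forall fun k => hxΩ (φ k))
    have h1 : Tendsto (fun k => f (x (φ k))) atTop (nhds (f xbar)) :=
      (hf.tendsto xbar).comp hxφ
    have h2 : Tendsto (fun k => f (x (φ k))) atTop (nhds L) :=
      (hL.comp hφ.tendsto_atTop).congr fun k => hzfx (φ k)
    have hLf : L = f xbar := tendsto_nhds_unique h2 h1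
    refine ⟨⟨xbar, hxbarΩ, hLf.symm⟩, ?_⟩
    exact le_of_tendsto hL (Eventually.of_forall fun k => (hz k).2)
  exact isCompact_Icc.of_isClosed_subset hclosed hsub
end

section
/- Let f : ℝⁿ → ℝᵐ be continuous and Ω ⊆ ℝⁿ closed and nonempty. Suppose there exists ȳ ∈ f(Ω) such that the sublevel set X = {x ∈ Ω : f(x) ≤ ȳ componentwise} is nonempty and compact. Then the problem min_{ℝᵐ₊} {f(x) : x ∈ Ω} admits a Pareto efficient solution. -/
/-- If some sublevel set `X = {x ∈ Ω : f(x) ≤ ȳ}` with `ȳ ∈ f(Ω)` is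
nonempty and compact, then the problem admits a Pareto efficient solution. -/
theorem exists_pareto_of_compact_sublevel (n m : ℕ)
    (f : (Fin n → ℝ) → (Fin m → ℝ)) (hf : Continuous f)
    (Ω : Set (Fin n → ℝ)) (hΩc : IsClosed Ω) (hΩne : Ω.Nonempty)
    (ybar : Fin m → ℝ) (hybar : ybar ∈ f '' Ω)
    (hXne : {x | x ∈ Ω ∧ f x ≤ ybar}.Nonempty)
    (hXcp : IsCompact {x | x ∈ Ω ∧ f x ≤ ybar}) :
    ∃ xbar ∈ Ω, ¬ ∃ x ∈ Ω, f x ≤ f xbar ∧ f x ≠ f xbar := by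
  set g : (Fin n → ℝ) → ℝ := fun x => ∑ i, f x i with hg
  have hgc : Continuous g := by
    apply continuous_finset_sum
    intro i _
    exact (continuous_apply i).comp hf
  obtain ⟨xbar, hxbarX, hmin⟩ :=
    hXcp.exists_isMinOn hXne (hgc.continuousOn)
  refine ⟨xbar, hxbarX.1, ?_⟩
  rintro ⟨x, hxΩ, hle, hne⟩
  have hxX : x ∈ {x | x ∈ Ω ∧ f x ≤ ybar} :=
    ⟨hxΩ, le_trans hle hxbarX.2⟩
  have hlt : g x < g xbar := by
    obtain ⟨i, hi⟩ : ∃ i, f x i < f xbar i := by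
      by_contra h
      push_neg at h
      exact hne (funext fun i => le_antisymm (hle i) (h i))
    exact Finset.sum_lt_sum (fun j _ => hle j) ⟨i, Finset.mem_univ i, hi⟩
  exact absurd (hmin hxX) (not_le.mpr hlt)
end

section
/- Let f : ℝⁿ → ℝᵐ be continuous and Ω ⊆ ℝⁿ closed and nonempty. If for every y ∈ ℝᵐ the section f(Ω) ∩ (y - ℝᵐ₊) is compact, then the set f(Ω) + ℝᵐ₊ is closed. -/
/-!
Near any point `z`, the set `S + ℝᵐ₊` agrees with `(S ∩ Iic y) + ℝᵐ₊` for a bound `y` whose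
lower set `Iic y` is a neighbourhood of `z`; the latter set is compact plus closed, hence closed.
-/

open Pointwise Set Filter Topology

theorem isClosed_add_Ici_zero_of_isCompact_inter_Iic {E : Type*} [AddCommGroup E] [PartialOrder E]
    [IsOrderedAddMonoid E] [TopologicalSpace E] [IsTopologicalAddGroup E] [ClosedIciTopology E]
    (hIic : ∀ z : E, ∃ y, Iic y ∈ 𝓝 z) {S : Set E} (hsec : ∀ y, IsCompact (S ∩ Iic y)) :
    IsClosed (S + Ici 0) := by
  refine isClosed_iff_frequently.mpr fun z hz => ?_
  obtain ⟨y, hy⟩ := hIic z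
  have hsub : (S + Ici 0) ∩ Iic y ⊆ S ∩ Iic y + Ici 0 := by
    rintro _ ⟨⟨s, hs, d, hd, rfl⟩, hle⟩
    exact ⟨s, ⟨hs, (le_add_of_nonneg_right hd).trans hle⟩, d, hd, rfl⟩
  have hclosed : IsClosed (S ∩ Iic y + Ici 0) := isClosed_Ici.add_left_of_isCompact (hsec y)
  have hz' := isClosed_iff_frequently.mp hclosed z ((hz.and_eventually hy).mono fun _ h => hsub h)
  exact add_subset_add_right inter_subset_left hz'

theorem closed_sum_of_compact_sections_general (n m : ℕ)
    (f : (Fin n → ℝ) → (Fin m → ℝ))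
    (Ω : Set (Fin n → ℝ))
    (hsec : ∀ y : Fin m → ℝ, IsCompact {z | z ∈ f '' Ω ∧ z ≤ y}) :
    IsClosed (f '' Ω + {d : Fin m → ℝ | 0 ≤ d}) :=
  isClosed_add_Ici_zero_of_isCompact_inter_Iic
    (fun z => ⟨z + 1, pi_Iic_mem_nhds' fun _ => lt_add_one _⟩) hsec

/-- If every section `f(Ω) ∩ (y - ℝᵐ₊)` is compact, then the set
`f(Ω) + ℝᵐ₊` is closed. -/
theorem closed_sum_of_compact_sections (n m : ℕ)
    (f : (Fin n → ℝ) → (Fin m → ℝ)) (hf : Continuous f)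
    (Ω : Set (Fin n → ℝ)) (hΩc : IsClosed Ω) (hΩne : Ω.Nonempty)
    (hsec : ∀ y : Fin m → ℝ, IsCompact {z | z ∈ f '' Ω ∧ z ≤ y}) :
    IsClosed (f '' Ω + {d : Fin m → ℝ | 0 ≤ d}) :=
  closed_sum_of_compact_sections_general n m f Ω hsec
end

section
/- Let f : ℝⁿ → ℝᵐ, Ω ⊆ ℝⁿ, and suppose the recession cone condition [f(Ω)]⊕ ∩ (-ℝᵐ₊) = {0} holds, where [Y]⊕ := {d ∈ ℝᵐ : ∃ sequences t_k ≥ 0, yᵏ ∈ Y with t_k → 0 and t_k yᵏ → d}. Then for every y ∈ ℝᵐ the section f(Ω) ∩ (y - ℝᵐ₊) is bounded. -/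
open Filter

/-- The recession cone of a set `Y ⊆ ℝᵐ`. -/
def recessionCone {m : ℕ} (Y : Set (Fin m → ℝ)) : Set (Fin m → ℝ) :=
  {d | ∃ (t : ℕ → ℝ) (y : ℕ → (Fin m → ℝ)),
    (∀ k, 0 ≤ t k) ∧ (∀ k, y k ∈ Y) ∧
    Tendsto t atTop (nhds 0) ∧ Tendsto (fun k => t k • y k) atTop (nhds d)}

/-- If `[f(Ω)]⊕ ∩ (-ℝᵐ₊) = {0}`, then every section
`f(Ω) ∩ (y - ℝᵐ₊)` is bounded. -/
theorem sections_bounded_of_recession (n m : ℕ)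
    (f : (Fin n → ℝ) → (Fin m → ℝ)) (Ω : Set (Fin n → ℝ))
    (hrec : recessionCone (f '' Ω) ∩ {d | d ≤ 0} = {0}) :
    ∀ y : Fin m → ℝ, Bornology.IsBounded {z | z ∈ f '' Ω ∧ z ≤ y} := by
  intro y
  by_contra hb
  rw [isBounded_iff_forall_norm_le] at hb
  push_neg at hb
  choose z hz hnorm using fun k : ℕ => hb (k : ℝ)
  have hmem : ∀ k, z k ∈ f '' Ω := fun k => (hz k).1
  have hle : ∀ k, z k ≤ y := fun k => (hz k).2
  have hnormpos : ∀ k : ℕ, (k : ℝ) < ‖z k‖ := hnorm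
  -- normalized sequence on the unit sphere
  set u : ℕ → (Fin m → ℝ) := fun k => ‖z k‖⁻¹ • z k with hu
  have hz0 : ∀ k, z k ≠ 0 := by
    intro k h
    have := hnormpos k
    rw [h, norm_zero] at this
    exact (Nat.cast_nonneg k).not_gt this
  have husphere : ∀ k, u k ∈ Metric.sphere (0 : Fin m → ℝ) 1 := by
    intro k
    simp only [Metric.mem_sphere, dist_zero_right, hu, norm_smul, norm_inv, norm_norm]
    rw [inv_mul_cancel₀ (norm_ne_zero_iff.mpr (hz0 k))]
  obtain ⟨d, hd, φ, hφ, hconv⟩ :=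
    (isCompact_sphere (0 : Fin m → ℝ) 1).tendsto_subseq husphere
  -- norms tend to infinity along the subsequence
  have hnt : Tendsto (fun k => ‖z (φ k)‖) atTop atTop := by
    apply tendsto_atTop_mono (fun k => (hnormpos (φ k)).le.trans' ?_)
      tendsto_natCast_atTop_atTop
    exact_mod_cast hφ.id_le k
  have ht0 : Tendsto (fun k => ‖z (φ k)‖⁻¹) atTop (nhds 0) := hnt.inv_tendsto_atTop
  -- d is in the recession cone
  have hdrec : d ∈ recessionCone (f '' Ω) := by
    refine ⟨fun k => ‖z (φ k)‖⁻¹, fun k => z (φ k),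
      fun k => inv_nonneg.mpr (norm_nonneg _), fun k => hmem (φ k), ht0, hconv⟩
  -- d ≤ 0
  have hdle : d ≤ 0 := by
    intro i
    have hcomp : Tendsto (fun k => (u (φ k)) i) atTop (nhds (d i)) := by
      exact hconv.apply_nhds i
    have hzero : Tendsto (fun k => ‖z (φ k)‖⁻¹ * y i) atTop (nhds 0) := by
      simpa using ht0.mul_const (y i)
    refine le_of_tendsto_of_tendsto' hcomp hzero fun k => ?_
    have : ‖z (φ k)‖⁻¹ * z (φ k) i ≤ ‖z (φ k)‖⁻¹ * y i :=
      mul_le_mul_of_nonneg_left (hle (φ k) i) (inv_nonneg.mpr (norm_nonneg _))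
    simpa [hu, Pi.smul_apply, smul_eq_mul] using this
  have : d = 0 := by
    have : d ∈ recessionCone (f '' Ω) ∩ {d | d ≤ 0} := ⟨hdrec, hdle⟩
    rwa [hrec] at this
  rw [this] at hd
  simp at hd
end

section
/- Let f : ℝⁿ → ℝᵐ be continuous, Ω ⊆ ℝⁿ closed nonempty, ȳ ∈ f(Ω), and suppose the section f(Ω) ∩ (ȳ - ℝᵐ₊) is bounded and f|_Ω is proper at sublevel ȳ (every sequence in Ω with f-values ≤ ȳ and norms tending to ∞ has ‖f‖-values tending to ∞). Then the problem min_{ℝᵐ₊} {f(x) : x ∈ Ω} admits a Pareto efficient solution. -/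
open Filter

/-- If `ȳ ∈ f(Ω)`, the section `f(Ω) ∩ (ȳ - ℝᵐ₊)` is bounded, and
`f|_Ω` is proper at sublevel `ȳ`, then the problem admits a Pareto efficient solution. -/
theorem exists_pareto_of_proper (n m : ℕ)
    (f : (Fin n → ℝ) → (Fin m → ℝ)) (hf : Continuous f)
    (Ω : Set (Fin n → ℝ)) (hΩc : IsClosed Ω) (hΩne : Ω.Nonempty)
    (ybar : Fin m → ℝ) (hybar : ybar ∈ f '' Ω)
    (hbdd : ∃ a : Fin m → ℝ, {z | z ∈ f '' Ω ∧ z ≤ ybar} ⊆ {z | a ≤ z})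
    (hproper : ∀ x : ℕ → (Fin n → ℝ), (∀ k, x k ∈ Ω) →
      Tendsto (fun k => ‖x k‖) atTop atTop → (∀ k, f (x k) ≤ ybar) →
      Tendsto (fun k => ‖f (x k)‖) atTop atTop) :
    ∃ xbar ∈ Ω, ¬ ∃ x ∈ Ω, f x ≤ f xbar ∧ f x ≠ f xbar := by
  obtain ⟨x0, hx0Ω, hx0⟩ := hybar
  obtain ⟨a, ha⟩ := hbdd
  set S : Set (Fin n → ℝ) := {x | x ∈ Ω ∧ f x ≤ ybar} with hS
  have hSne : S.Nonempty := ⟨x0, hx0Ω, le_of_eq hx0⟩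
  have hSclosed : IsClosed S := hΩc.inter (isClosed_le hf continuous_const)
  -- norm bound on f over S
  have hfbound : ∀ x ∈ S, ‖f x‖ ≤ max ‖a‖ ‖ybar‖ := by
    intro x hx
    have haf : a ≤ f x := ha ⟨⟨x, hx.1, rfl⟩, hx.2⟩
    rw [pi_norm_le_iff_of_nonneg (le_trans (norm_nonneg a) (le_max_left _ _))]
    intro i
    rw [Real.norm_eq_abs, abs_le]
    constructor
    · have hai : |a i| ≤ ‖a‖ := by
        simpa [Real.norm_eq_abs] using norm_le_pi_norm a i
      have h2 := haf i
      have h3 := neg_abs_le (a i)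
      have h4 := le_max_left ‖a‖ ‖ybar‖
      linarith
    · exact le_trans (hx.2 i) (le_trans (le_abs_self _)
        ((norm_le_pi_norm ybar i).trans (le_max_right _ _)))
  -- S is bounded
  have hSbdd : Bornology.IsBounded S := by
    by_contra hub
    rw [Metric.isBounded_iff_subset_closedBall 0] at hub
    push_neg at hub
    have hseq : ∀ k : ℕ, ∃ x, x ∈ S ∧ (k : ℝ) < ‖x‖ := by
      intro k
      obtain ⟨x, hxS, hxr⟩ := Set.not_subset.1 (hub k)
      refine ⟨x, hxS, ?_⟩
      simpa [Metric.mem_closedBall, dist_zero_right, not_le] using hxr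
    choose x hxS hxn using hseq
    have htend : Tendsto (fun k => ‖x k‖) atTop atTop :=
      tendsto_atTop_mono (fun k => (hxn k).le) tendsto_natCast_atTop_atTop
    have := hproper x (fun k => (hxS k).1) htend (fun k => (hxS k).2)
    obtain ⟨k, hk⟩ := (this.eventually_gt_atTop (max ‖a‖ ‖ybar‖)).exists
    exact absurd (hfbound (x k) (hxS k)) (not_le.2 hk)
  have hScpt : IsCompact S := Metric.isCompact_of_isClosed_isBounded hSclosed hSbdd
  -- minimize sum of components
  have hgc : Continuous (fun x => ∑ i, f x i) := by
    exact continuous_finset_sum _ (fun i _ => (continuous_apply i).comp hf)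
  obtain ⟨xbar, hxbarS, hmin⟩ := hScpt.exists_isMinOn hSne hgc.continuousOn
  refine ⟨xbar, hxbarS.1, ?_⟩
  rintro ⟨x, hxΩ, hle, hne⟩
  have hxS : x ∈ S := ⟨hxΩ, hle.trans hxbarS.2⟩
  have hsumle : ∑ i, f xbar i ≤ ∑ i, f x i := hmin hxS
  have : ∃ i, f x i < f xbar i := by
    by_contra h
    push_neg at h
    exact hne (funext fun i => le_antisymm (hle i) (h i))
  obtain ⟨i, hi⟩ := this
  have : ∑ i, f x i < ∑ i, f xbar i :=
    Finset.sum_lt_sum (fun j _ => hle j) ⟨i, Finset.mem_univ i, hi⟩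
  linarith
end
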